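/- In the setup X, Y, Z with Y = αX + ε_Y, Z = δY + ε_Z (errors independent of X and each other, mean zero, Var(ε_Y) > 0, Var(ε_Z) > 0, δ ≠ 0, α ≠ 0), the correction factor c = (σ²_X/σ²_{X·Z})·(σ²_{Y·Z}/σ²_Y) satisfies c = (σ²_Z − σ²_Y δ²)/(σ²_Z − σ²_X α² δ²) and 0 < c < 1; in particular sign(r_{YX·Z}) = sign(α). -/

import Mathlib

open MeasureTheory ProbabilityTheory

/-- Covariance of two real random variables. -/
noncomputable def cov {Ω : Type*} [MeasurableSpace Ω] (μ : MeasureTheory.Measure Ω)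
    (f g : Ω → ℝ) : ℝ :=
  ∫ ω, (f ω - ∫ x, f x ∂μ) * (g ω - ∫ x, g x ∂μ) ∂μ

/-- Partial covariance given `Z`: `σ_{AB·Z} = Cov(A,B) − Cov(A,Z)Cov(Z,B)/Var(Z)`. -/
noncomputable def pcov {Ω : Type*} [MeasurableSpace Ω] (μ : MeasureTheory.Measure Ω)
    (f g z : Ω → ℝ) : ℝ :=
  cov μ f g - cov μ f z * cov μ z g / cov μ z z

/-!
Writing `a = σ²_X`, `b = Var(ε_Y)`, `c = Var(ε_Z)`, the chain gives `σ_{XY} = αa`,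
`σ²_Y = α²a + b`, `σ_{XZ} = δσ_{XY}`, `σ_{YZ} = δσ²_Y` and `σ²_Z = δ²σ²_Y + c`.
Substituting, the partial covariances given `Z` all share the denominator `σ²_Z`:
`σ²_{X·Z} = a(δ²b + c)/σ²_Z`, `σ²_{Y·Z} = σ²_Y c/σ²_Z` and `σ_{XY·Z} = αac/σ²_Z`.
Hence both the correction factor and `r_{YX·Z}/α` equal `c/(δ²b + c)`, which lies
strictly between `0` and `1` because `δ²b > 0`.
-/

namespace Real

theorem sign_mul_of_pos (x : ℝ) {k : ℝ} (hk : 0 < k) : sign (x * k) = sign x := by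
  rcases lt_trichotomy x 0 with hx | rfl | hx
  · rw [sign_of_neg (mul_neg_of_neg_of_pos hx hk), sign_of_neg hx]
  · rw [zero_mul]
  · rw [sign_of_pos (mul_pos hx hk), sign_of_pos hx]

end Real

section Covariance

variable {Ω : Type*} [MeasurableSpace Ω] {μ : Measure Ω}

theorem cov_comm (f g : Ω → ℝ) : cov μ f g = cov μ g f := covariance_comm f g

theorem cov_const_mul_add_left [IsFiniteMeasure μ] {A E C : Ω → ℝ}
    (hA : MemLp A 2 μ) (hE : MemLp E 2 μ) (hC : MemLp C 2 μ) (β : ℝ) :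
    cov μ (fun ω => β * A ω + E ω) C = β * cov μ A C + cov μ E C := by
  rw [show (fun ω => β * A ω + E ω) = (fun ω => β * A ω) + E from rfl]
  exact (covariance_add_left (hA.const_mul β) hE hC).trans
    (congrArg (· + _) (covariance_const_mul_left β))

theorem cov_const_mul_add_right [IsFiniteMeasure μ] {A E C : Ω → ℝ}
    (hA : MemLp A 2 μ) (hE : MemLp E 2 μ) (hC : MemLp C 2 μ) (β : ℝ) :
    cov μ C (fun ω => β * A ω + E ω) = β * cov μ C A + cov μ C E := by
  rw [cov_comm, cov_const_mul_add_left hA hE hC, cov_comm A, cov_comm E]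

theorem ProbabilityTheory.iIndepFun.cov_eq_zero {ι : Type*} {f : ι → Ω → ℝ}
    (hf : iIndepFun f μ) {i j : ι} (hij : i ≠ j) (hi : MemLp (f i) 2 μ)
    (hj : MemLp (f j) 2 μ) :
    cov μ (f i) (f j) = 0 :=
  (hf.indepFun hij).covariance_eq_zero hi hj

theorem pcov_eq_div {f g z : Ω → ℝ} (hz : cov μ z z ≠ 0) :
    pcov μ f g z = (cov μ f g * cov μ z z - cov μ f z * cov μ z g) / cov μ z z := by
  rw [pcov, sub_div, mul_div_cancel_right₀ _ hz]

end Covariance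

structure IsLinearChain {Ω : Type*} [MeasurableSpace Ω] (μ : Measure Ω)
    (X eY eZ Y Z : Ω → ℝ) (α δ : ℝ) : Prop where
  eq_Y : Y = fun ω => α * X ω + eY ω
  eq_Z : Z = fun ω => δ * Y ω + eZ ω
  memLp_X : MemLp X 2 μ
  memLp_eY : MemLp eY 2 μ
  memLp_eZ : MemLp eZ 2 μ
  cov_X_eY : cov μ X eY = 0
  cov_X_eZ : cov μ X eZ = 0
  cov_eY_eZ : cov μ eY eZ = 0

namespace IsLinearChain

variable {Ω : Type*} [MeasurableSpace Ω] {μ : Measure Ω} {X eY eZ Y Z : Ω → ℝ}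
  {α δ : ℝ}

theorem memLp_Y (h : IsLinearChain μ X eY eZ Y Z α δ) : MemLp Y 2 μ := by
  rw [h.eq_Y]
  exact (h.memLp_X.const_mul α).add h.memLp_eY

theorem memLp_Z (h : IsLinearChain μ X eY eZ Y Z α δ) : MemLp Z 2 μ := by
  rw [h.eq_Z]
  exact (h.memLp_Y.const_mul δ).add h.memLp_eZ

variable [IsFiniteMeasure μ]

theorem cov_X_Y (h : IsLinearChain μ X eY eZ Y Z α δ) : cov μ X Y = α * cov μ X X := by
  rw [h.eq_Y, cov_const_mul_add_right h.memLp_X h.memLp_eY h.memLp_X, h.cov_X_eY, add_zero]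

theorem cov_eY_Y (h : IsLinearChain μ X eY eZ Y Z α δ) : cov μ eY Y = cov μ eY eY := by
  rw [h.eq_Y, cov_const_mul_add_right h.memLp_X h.memLp_eY h.memLp_eY, cov_comm, h.cov_X_eY,
    mul_zero, zero_add]

theorem cov_Y_Y (h : IsLinearChain μ X eY eZ Y Z α δ) :
    cov μ Y Y = α ^ 2 * cov μ X X + cov μ eY eY := by
  nth_rw 1 [h.eq_Y]
  rw [cov_const_mul_add_left h.memLp_X h.memLp_eY h.memLp_Y, h.cov_X_Y, h.cov_eY_Y]
  ring

theorem cov_eZ_Y (h : IsLinearChain μ X eY eZ Y Z α δ) : cov μ eZ Y = 0 := by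
  rw [h.eq_Y, cov_const_mul_add_right h.memLp_X h.memLp_eY h.memLp_eZ, cov_comm, h.cov_X_eZ,
    cov_comm, h.cov_eY_eZ, mul_zero, zero_add]

theorem cov_Z_X (h : IsLinearChain μ X eY eZ Y Z α δ) : cov μ Z X = δ * cov μ X Y := by
  rw [h.eq_Z, cov_const_mul_add_left h.memLp_Y h.memLp_eZ h.memLp_X, cov_comm eZ, h.cov_X_eZ,
    add_zero, cov_comm]

theorem cov_Z_Y (h : IsLinearChain μ X eY eZ Y Z α δ) : cov μ Z Y = δ * cov μ Y Y := by
  rw [h.eq_Z, cov_const_mul_add_left h.memLp_Y h.memLp_eZ h.memLp_Y, h.cov_eZ_Y, add_zero]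

theorem cov_eZ_Z (h : IsLinearChain μ X eY eZ Y Z α δ) : cov μ eZ Z = cov μ eZ eZ := by
  rw [h.eq_Z, cov_const_mul_add_right h.memLp_Y h.memLp_eZ h.memLp_eZ, h.cov_eZ_Y, mul_zero,
    zero_add]

theorem cov_Z_Z (h : IsLinearChain μ X eY eZ Y Z α δ) :
    cov μ Z Z = δ ^ 2 * cov μ Y Y + cov μ eZ eZ := by
  nth_rw 1 [h.eq_Z]
  rw [cov_const_mul_add_left h.memLp_Y h.memLp_eZ h.memLp_Z, cov_comm Y, h.cov_Z_Y, h.cov_eZ_Z]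
  ring

theorem pcov_X_X_Z (h : IsLinearChain μ X eY eZ Y Z α δ) (hZ : cov μ Z Z ≠ 0) :
    pcov μ X X Z = cov μ X X * (δ ^ 2 * cov μ eY eY + cov μ eZ eZ) / cov μ Z Z := by
  rw [pcov_eq_div hZ, cov_comm X Z, h.cov_Z_X, h.cov_X_Y, h.cov_Z_Z, h.cov_Y_Y]
  ring

theorem pcov_Y_Y_Z (h : IsLinearChain μ X eY eZ Y Z α δ) (hZ : cov μ Z Z ≠ 0) :
    pcov μ Y Y Z = cov μ Y Y * cov μ eZ eZ / cov μ Z Z := by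
  rw [pcov_eq_div hZ, cov_comm Y Z, h.cov_Z_Y, h.cov_Z_Z]
  ring

theorem pcov_X_Y_Z (h : IsLinearChain μ X eY eZ Y Z α δ) (hZ : cov μ Z Z ≠ 0) :
    pcov μ X Y Z = α * cov μ X X * cov μ eZ eZ / cov μ Z Z := by
  rw [pcov_eq_div hZ, cov_comm X Z, h.cov_Z_X, h.cov_Z_Y, h.cov_X_Y, h.cov_Z_Z, h.cov_Y_Y]
  ring

theorem cov_Y_Y_pos (h : IsLinearChain μ X eY eZ Y Z α δ) (hX : 0 < cov μ X X)
    (heY : 0 < cov μ eY eY) : 0 < cov μ Y Y := by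
  rw [h.cov_Y_Y]
  positivity

theorem cov_Z_Z_pos (h : IsLinearChain μ X eY eZ Y Z α δ) (hX : 0 < cov μ X X)
    (heY : 0 < cov μ eY eY) (heZ : 0 < cov μ eZ eZ) : 0 < cov μ Z Z := by
  rw [h.cov_Z_Z]
  have := h.cov_Y_Y_pos hX heY
  positivity

theorem correctionFactor_eq (h : IsLinearChain μ X eY eZ Y Z α δ) (hX : 0 < cov μ X X)
    (heY : 0 < cov μ eY eY) (heZ : 0 < cov μ eZ eZ) :
    cov μ X X / pcov μ X X Z * (pcov μ Y Y Z / cov μ Y Y) =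
      cov μ eZ eZ / (δ ^ 2 * cov μ eY eY + cov μ eZ eZ) := by
  have hY := h.cov_Y_Y_pos hX heY
  have hZ := h.cov_Z_Z_pos hX heY heZ
  rw [h.pcov_X_X_Z hZ.ne', h.pcov_Y_Y_Z hZ.ne']
  field_simp

theorem pcov_X_Y_Z_div_pcov_X_X_Z (h : IsLinearChain μ X eY eZ Y Z α δ) (hX : 0 < cov μ X X)
    (heY : 0 < cov μ eY eY) (heZ : 0 < cov μ eZ eZ) :
    pcov μ X Y Z / pcov μ X X Z =
      α * (cov μ eZ eZ / (δ ^ 2 * cov μ eY eY + cov μ eZ eZ)) := by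
  have hZ := h.cov_Z_Z_pos hX heY heZ
  rw [h.pcov_X_Y_Z hZ.ne', h.pcov_X_X_Z hZ.ne']
  field_simp

end IsLinearChain

theorem stmt_10_general {Ω : Type*} [MeasurableSpace Ω] (μ : MeasureTheory.Measure Ω)
    [IsProbabilityMeasure μ]
    (X eY eZ Y Z : Ω → ℝ) (α δ : ℝ) (hδ : δ ≠ 0)
    (hY : Y = fun ω => α * X ω + eY ω)
    (hZ : Z = fun ω => δ * Y ω + eZ ω)
    (hX2 : MemLp X 2 μ) (heY2 : MemLp eY 2 μ) (heZ2 : MemLp eZ 2 μ)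
    (hindep : iIndepFun ![X, eY, eZ] μ)
    (hvX : 0 < cov μ X X) (hveY : 0 < cov μ eY eY) (hveZ : 0 < cov μ eZ eZ) :
    (cov μ X X / pcov μ X X Z) * (pcov μ Y Y Z / cov μ Y Y) =
      (cov μ Z Z - cov μ Y Y * δ ^ 2) / (cov μ Z Z - cov μ X X * α ^ 2 * δ ^ 2) ∧
    0 < (cov μ X X / pcov μ X X Z) * (pcov μ Y Y Z / cov μ Y Y) ∧
    (cov μ X X / pcov μ X X Z) * (pcov μ Y Y Z / cov μ Y Y) < 1 ∧
    Real.sign (pcov μ X Y Z / pcov μ X X Z) = Real.sign α := by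
  have h : IsLinearChain μ X eY eZ Y Z α δ :=
    { eq_Y := hY, eq_Z := hZ, memLp_X := hX2, memLp_eY := heY2, memLp_eZ := heZ2
      cov_X_eY := hindep.cov_eq_zero (i := 0) (j := 1) (by decide) hX2 heY2
      cov_X_eZ := hindep.cov_eq_zero (i := 0) (j := 2) (by decide) hX2 heZ2
      cov_eY_eZ := hindep.cov_eq_zero (i := 1) (j := 2) (by decide) heY2 heZ2 }
  have hδeY : 0 < δ ^ 2 * cov μ eY eY := by positivity
  rw [h.correctionFactor_eq hvX hveY hveZ, h.pcov_X_Y_Z_div_pcov_X_X_Z hvX hveY hveZ,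
    Real.sign_mul_of_pos α (by positivity)]
  refine ⟨?_, by positivity, (div_lt_one (by positivity)).mpr (by linarith), rfl⟩
  rw [h.cov_Z_Z, h.cov_Y_Y]
  congr 1 <;> ring

/-- In the setup `Y = αX + ε_Y`, `Z = δY + ε_Z` (mutually independent mean-zero
errors, `Var(ε_Y) > 0`, `Var(ε_Z) > 0`, `δ ≠ 0`, `α ≠ 0`), the correction factor
`c = (σ²_X/σ²_{X·Z})·(σ²_{Y·Z}/σ²_Y)` satisfies
`c = (σ²_Z − σ²_Y δ²)/(σ²_Z − σ²_X α² δ²)` and `0 < c < 1`; in particular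
`sign(r_{YX·Z}) = sign(α)`. -/
theorem stmt_10 {Ω : Type*} [MeasurableSpace Ω] (μ : MeasureTheory.Measure Ω)
    [IsProbabilityMeasure μ]
    (X eY eZ Y Z : Ω → ℝ) (α δ : ℝ) (hα : α ≠ 0) (hδ : δ ≠ 0)
    (hY : Y = fun ω => α * X ω + eY ω)
    (hZ : Z = fun ω => δ * Y ω + eZ ω)
    (hX2 : MemLp X 2 μ) (heY2 : MemLp eY 2 μ) (heZ2 : MemLp eZ 2 μ)
    (hindep : iIndepFun ![X, eY, eZ] μ)
    (hmX : ∫ ω, X ω ∂μ = 0) (hmY : ∫ ω, eY ω ∂μ = 0) (hmZ : ∫ ω, eZ ω ∂μ = 0)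
    (hvX : 0 < cov μ X X) (hveY : 0 < cov μ eY eY) (hveZ : 0 < cov μ eZ eZ)
    (hvY : cov μ Y Y ≠ 0) (hvZ : cov μ Z Z ≠ 0) (hpX : pcov μ X X Z ≠ 0) :
    (cov μ X X / pcov μ X X Z) * (pcov μ Y Y Z / cov μ Y Y) =
      (cov μ Z Z - cov μ Y Y * δ ^ 2) / (cov μ Z Z - cov μ X X * α ^ 2 * δ ^ 2) ∧
    0 < (cov μ X X / pcov μ X X Z) * (pcov μ Y Y Z / cov μ Y Y) ∧
    (cov μ X X / pcov μ X X Z) * (pcov μ Y Y Z / cov μ Y Y) < 1 ∧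
    Real.sign (pcov μ X Y Z / pcov μ X X Z) = Real.sign α :=
  stmt_10_general μ X eY eZ Y Z α δ hδ hY hZ hX2 heY2 heZ2 hindep hvX hveY hveZ
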